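/- Let ξ₁,...,ξₙ be independent, each with mean 0 and satisfying λ E[|ξᵢ|³ exp(λ|ξᵢ|)] ≤ E ξᵢ² for some λ > 0. Set Sₙ = Σξᵢ, Bₙ² = Σ E ξᵢ², and Sₙ* = Sₙ 1(|Sₙ| ≤ Bₙ²). Then the tail bound P((Sₙ*/Bₙ)² > x) ≤ 2 exp(-c₂ x) holds for all x ≥ 0, where c₂ = (1/2) min(λ/3, 1/2). -/

import Mathlib

/-!
A second-order Taylor bound `exp y ≤ 1 + y + y² / 2 · exp |y|` turns Sakhanenko's condition into
`E exp(t ξᵢ) ≤ exp(t² E ξᵢ²)` for `|t| ≤ λ / 3`, hence `E exp(t Sₙ) ≤ exp(t² Bₙ²)` on that range by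
independence. As `|Sₙ*| ≤ min(|Sₙ|, Bₙ²)`, the event is empty when `x ≥ Bₙ²`; otherwise it lies in
`{|Sₙ| ≥ √x Bₙ}`, and Chernoff's bound on both tails with `t = 2c₂√x / Bₙ ≤ λ / 3` gives
`2 exp(-2c₂x + 4c₂²x) ≤ 2 exp(-c₂x)`, since `c₂ ≤ 1/4`.
-/

open MeasureTheory ProbabilityTheory Real

lemma Real.exp_le_one_add_mul_exp (s : ℝ) : exp s ≤ 1 + s * exp s := by
  have h := mul_le_mul_of_nonneg_right (add_one_le_exp (-s)) (exp_pos s).le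
  rw [← exp_add, neg_add_cancel, exp_zero] at h
  linarith

lemma Real.exp_le_one_add_add_sq_div_two_of_nonpos {y : ℝ} (hy : y ≤ 0) :
    exp y ≤ 1 + y + y ^ 2 / 2 := by
  have hq := quadratic_le_exp_of_nonneg (neg_nonneg.2 hy)
  have hinv : exp y * exp (-y) = 1 := by rw [← exp_add, add_neg_cancel, exp_zero]
  nlinarith [exp_pos y, sq_nonneg y, pow_two_nonneg (y ^ 2)]

lemma Real.exp_le_one_add_add_sq_div_two_mul_exp_of_nonneg {y : ℝ} (hy : 0 ≤ y) :
    exp y ≤ 1 + y + y ^ 2 / 2 * exp y := by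
  have hle : ∫ s in (0 : ℝ)..y, (exp s - 1) ≤ ∫ s in (0 : ℝ)..y, s * exp y :=
    intervalIntegral.integral_mono_on hy
      ((by fun_prop : Continuous fun s => exp s - 1).intervalIntegrable _ _)
      ((by fun_prop : Continuous fun s => s * exp y).intervalIntegrable _ _) fun s hs =>
      calc exp s - 1 ≤ s * exp s := by linarith [exp_le_one_add_mul_exp s]
        _ ≤ s * exp y := by gcongr; exacts [hs.1, hs.2]
  rw [intervalIntegral.integral_sub (continuous_exp.intervalIntegrable _ _)
    intervalIntegrable_const, integral_exp, intervalIntegral.integral_mul_const, integral_id] at hle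
  simp only [exp_zero, intervalIntegral.integral_const, sub_zero, smul_eq_mul, mul_one, ne_eq,
    OfNat.ofNat_ne_zero, not_false_eq_true, zero_pow] at hle
  linarith

lemma Real.exp_le_one_add_add_sq_div_two_mul_exp_abs (y : ℝ) :
    exp y ≤ 1 + y + y ^ 2 / 2 * exp |y| := by
  rcases le_total 0 y with hy | hy
  · simpa [abs_of_nonneg hy] using exp_le_one_add_add_sq_div_two_mul_exp_of_nonneg hy
  · calc exp y ≤ 1 + y + y ^ 2 / 2 := exp_le_one_add_add_sq_div_two_of_nonpos hy
      _ ≤ 1 + y + y ^ 2 / 2 * exp |y| := by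
        gcongr; exact le_mul_of_one_le_right (by positivity) (one_le_exp (abs_nonneg y))

lemma Real.exp_mul_le_of_abs_le {t c a : ℝ} (ht : |t| ≤ c) (hca : c ≤ a) (x : ℝ) :
    exp (t * x) ≤ 1 + t * x + t ^ 2 / 2 * (x ^ 2 + c * (|x| ^ 3 * exp (a * |x|))) := by
  have hmoment : x ^ 2 * exp |t * x| ≤ x ^ 2 + c * (|x| ^ 3 * exp (a * |x|)) :=
    calc x ^ 2 * exp |t * x| ≤ x ^ 2 * (1 + |t * x| * exp |t * x|) := by
          gcongr; exact exp_le_one_add_mul_exp _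
      _ = x ^ 2 + |t| * (|x| ^ 3 * exp (|t| * |x|)) := by
          rw [abs_mul, ← sq_abs x]; ring
      _ ≤ x ^ 2 + c * (|x| ^ 3 * exp (a * |x|)) := by
          have hc : 0 ≤ c := (abs_nonneg t).trans ht
          gcongr
          exact ht.trans hca
  calc exp (t * x) ≤ 1 + t * x + (t * x) ^ 2 / 2 * exp |t * x| :=
        exp_le_one_add_add_sq_div_two_mul_exp_abs _
    _ = 1 + t * x + t ^ 2 / 2 * (x ^ 2 * exp |t * x|) := by ring
    _ ≤ _ := by gcongr

section Sakhanenko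

variable {Ω : Type*} [MeasurableSpace Ω] {μ : Measure Ω} {X : Ω → ℝ} {l t : ℝ}

lemma integrable_sakhanenko_majorant [IsFiniteMeasure μ] (hX : MemLp X 2 μ)
    (h3 : Integrable (fun ω => |X ω| ^ 3 * exp (l * |X ω|)) μ) (t c : ℝ) :
    Integrable (fun ω => 1 + t * X ω + t ^ 2 / 2 * (X ω ^ 2 + c * (|X ω| ^ 3 * exp (l * |X ω|))))
      μ :=
  ((integrable_const 1).add ((hX.integrable one_le_two).const_mul t)).add
    ((hX.integrable_sq.add (h3.const_mul c)).const_mul (t ^ 2 / 2))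

lemma integrable_exp_mul_of_sakhanenko [IsFiniteMeasure μ] (hX : MemLp X 2 μ)
    (h3 : Integrable (fun ω => |X ω| ^ 3 * exp (l * |X ω|)) μ) (ht : |t| ≤ l / 3) :
    Integrable (fun ω => exp (t * X ω)) μ := by
  refine (integrable_sakhanenko_majorant hX h3 t (l / 3)).mono'
    (continuous_exp.comp_aestronglyMeasurable (hX.1.const_mul t)) (ae_of_all _ fun ω => ?_)
  rw [norm_of_nonneg (exp_pos _).le]
  exact exp_mul_le_of_abs_le ht (by linarith [(abs_nonneg t).trans ht]) (X ω)

lemma mgf_le_exp_sq_mul_of_sakhanenko [IsProbabilityMeasure μ] (hX : MemLp X 2 μ)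
    (hmean : ∫ ω, X ω ∂μ = 0) (h3 : Integrable (fun ω => |X ω| ^ 3 * exp (l * |X ω|)) μ)
    (hsak : l * ∫ ω, |X ω| ^ 3 * exp (l * |X ω|) ∂μ ≤ ∫ ω, X ω ^ 2 ∂μ) (ht : |t| ≤ l / 3) :
    mgf X μ t ≤ exp (t ^ 2 * ∫ ω, X ω ^ 2 ∂μ) := by
  set V := ∫ ω, X ω ^ 2 ∂μ
  set T := ∫ ω, |X ω| ^ 3 * exp (l * |X ω|) ∂μ
  have hV : 0 ≤ V := integral_nonneg fun ω => sq_nonneg _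
  calc mgf X μ t
      ≤ ∫ ω, (1 + t * X ω + t ^ 2 / 2 * (X ω ^ 2 + l / 3 * (|X ω| ^ 3 * exp (l * |X ω|)))) ∂μ :=
        integral_mono (integrable_exp_mul_of_sakhanenko hX h3 ht)
          (integrable_sakhanenko_majorant hX h3 t (l / 3))
          fun ω => exp_mul_le_of_abs_le ht (by linarith [(abs_nonneg t).trans ht]) (X ω)
    _ = 1 + t ^ 2 / 2 * (V + l / 3 * T) := by
        have hX1 := hX.integrable one_le_two
        have hlin : Integrable (fun ω => 1 + t * X ω) μ :=
          (integrable_const 1).add (hX1.const_mul t)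
        have hquad : Integrable (fun ω => X ω ^ 2 + l / 3 * (|X ω| ^ 3 * exp (l * |X ω|))) μ :=
          hX.integrable_sq.add (h3.const_mul _)
        rw [integral_add hlin (hquad.const_mul _), integral_add (integrable_const 1)
            (hX1.const_mul t), integral_const_mul, integral_const_mul,
          integral_add hX.integrable_sq (h3.const_mul _), integral_const_mul, hmean]
        simp [V, T]
    -- Sakhanenko's condition gives `V + l / 3 * T ≤ 4 / 3 * V ≤ 2 * V`
    _ ≤ 1 + t ^ 2 * V := by nlinarith [sq_nonneg t]
    _ ≤ exp (t ^ 2 * V) := by linarith [add_one_le_exp (t ^ 2 * V)]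

lemma ProbabilityTheory.iIndepFun.integrable_exp_mul_sum_of_sakhanenko {ι : Type*} [Fintype ι]
    {ξ : ι → Ω → ℝ}
    (hindep : iIndepFun ξ μ) (hmeas : ∀ i, Measurable (ξ i)) (h2 : ∀ i, MemLp (ξ i) 2 μ)
    (h3 : ∀ i, Integrable (fun ω => |ξ i ω| ^ 3 * exp (l * |ξ i ω|)) μ) (ht : |t| ≤ l / 3) :
    Integrable (fun ω => exp (t * ∑ i, ξ i ω)) μ := by
  have := hindep.isProbabilityMeasure
  simpa [Finset.sum_apply] using hindep.integrable_exp_mul_sum hmeas (s := Finset.univ)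
    fun i _ => integrable_exp_mul_of_sakhanenko (h2 i) (h3 i) ht

lemma ProbabilityTheory.iIndepFun.mgf_sum_le_of_sakhanenko {ι : Type*} [Fintype ι]
    {ξ : ι → Ω → ℝ}
    (hindep : iIndepFun ξ μ) (h2 : ∀ i, MemLp (ξ i) 2 μ) (hmean : ∀ i, ∫ ω, ξ i ω ∂μ = 0)
    (h3 : ∀ i, Integrable (fun ω => |ξ i ω| ^ 3 * exp (l * |ξ i ω|)) μ)
    (hsak : ∀ i, l * ∫ ω, |ξ i ω| ^ 3 * exp (l * |ξ i ω|) ∂μ ≤ ∫ ω, ξ i ω ^ 2 ∂μ)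
    (ht : |t| ≤ l / 3) :
    mgf (fun ω => ∑ i, ξ i ω) μ t ≤ exp (t ^ 2 * ∑ i, ∫ ω, ξ i ω ^ 2 ∂μ) := by
  have := hindep.isProbabilityMeasure
  have hsum : (fun ω => ∑ i, ξ i ω) = ∑ i, ξ i := by ext; simp [Finset.sum_apply]
  rw [hsum, hindep.mgf_sum₀ (fun i => (h2 i).1.aemeasurable), Finset.mul_sum, exp_sum]
  exact Finset.prod_le_prod (fun i _ => mgf_nonneg) fun i _ =>
    mgf_le_exp_sq_mul_of_sakhanenko (h2 i) (hmean i) (h3 i) (hsak i) ht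

end Sakhanenko

section Chernoff

variable {Ω : Type*} [MeasurableSpace Ω] {μ : Measure Ω} [IsFiniteMeasure μ] {X : Ω → ℝ}

lemma measureReal_le_abs_le_of_mgf_le {v t : ℝ} (ht : 0 ≤ t)
    (hint : ∀ u, |u| ≤ t → Integrable (fun ω => exp (u * X ω)) μ)
    (hmgf : ∀ u, |u| ≤ t → mgf X μ u ≤ exp (u ^ 2 * v)) (a : ℝ) :
    μ.real {ω | a ≤ |X ω|} ≤ 2 * exp (-t * a + t ^ 2 * v) := by
  have htt : |t| ≤ t := (abs_of_nonneg ht).le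
  have hnt : |-t| ≤ t := by rw [abs_neg]; exact htt
  have hupper : μ.real {ω | a ≤ X ω} ≤ exp (-t * a + t ^ 2 * v) := by
    calc μ.real {ω | a ≤ X ω} ≤ exp (-t * a) * mgf X μ t :=
          measure_ge_le_exp_mul_mgf a ht (hint t htt)
      _ ≤ exp (-t * a) * exp (t ^ 2 * v) := by gcongr; exact hmgf t htt
      _ = _ := (exp_add _ _).symm
  have hlower : μ.real {ω | X ω ≤ -a} ≤ exp (-t * a + t ^ 2 * v) := by
    calc μ.real {ω | X ω ≤ -a} ≤ exp (- -t * -a) * mgf X μ (-t) :=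
          measure_le_le_exp_mul_mgf (-a) (neg_nonpos.2 ht) (hint (-t) hnt)
      _ ≤ exp (- -t * -a) * exp ((-t) ^ 2 * v) := by gcongr; exact hmgf (-t) hnt
      _ = _ := by rw [← exp_add]; ring_nf
  calc μ.real {ω | a ≤ |X ω|} ≤ μ.real ({ω | a ≤ X ω} ∪ {ω | X ω ≤ -a}) :=
        measureReal_mono fun ω (hω : a ≤ |X ω|) =>
          show a ≤ X ω ∨ X ω ≤ -a from (le_abs'.1 hω).symm
    _ ≤ μ.real {ω | a ≤ X ω} + μ.real {ω | X ω ≤ -a} := measureReal_union_le _ _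
    _ ≤ _ := by linarith

lemma measureReal_sqrt_mul_le_abs_le_of_mgf_le {v c x : ℝ} (hc : 0 ≤ c) (hc4 : c ≤ 1 / 4)
    (hx : 0 ≤ x) (hxv : x < v)
    (hint : ∀ u, |u| ≤ 2 * c → Integrable (fun ω => exp (u * X ω)) μ)
    (hmgf : ∀ u, |u| ≤ 2 * c → mgf X μ u ≤ exp (u ^ 2 * v)) :
    μ.real {ω | √x * √v ≤ |X ω|} ≤ 2 * exp (-c * x) := by
  have hv : 0 < √v := sqrt_pos.2 (hx.trans_lt hxv)
  set t := 2 * c * √x / √v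
  have ht : 0 ≤ t := by positivity
  have htc : t ≤ 2 * c := by
    rw [div_le_iff₀ hv]
    exact mul_le_mul_of_nonneg_left (sqrt_le_sqrt hxv.le) (by positivity)
  have hexponent : -t * (√x * √v) + t ^ 2 * v = -(2 * c * x) + 4 * c ^ 2 * x := by
    have htv : t * √v = 2 * c * √x := div_mul_cancel₀ _ hv.ne'
    calc -t * (√x * √v) + t ^ 2 * v = -(t * √v) * √x + (t * √v) ^ 2 := by
          rw [mul_pow, sq_sqrt (hx.trans hxv.le)]; ring
      _ = _ := by rw [htv]; linear_combination (4 * c ^ 2 - 2 * c) * sq_sqrt hx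
  calc μ.real {ω | √x * √v ≤ |X ω|} ≤ 2 * exp (-t * (√x * √v) + t ^ 2 * v) :=
        measureReal_le_abs_le_of_mgf_le ht (fun u hu => hint u (hu.trans htc))
          (fun u hu => hmgf u (hu.trans htc)) _
    _ ≤ 2 * exp (-c * x) := by
        rw [hexponent]
        gcongr
        nlinarith [mul_nonneg (mul_nonneg hc hx) (by linarith : 0 ≤ 1 - 4 * c)]

end Chernoff

lemma sq_div_sqrt_le_of_abs_le {s b : ℝ} (h : |s| ≤ b) : (s / √b) ^ 2 ≤ b := by
  have hb := (abs_nonneg s).trans h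
  rw [div_pow, sq_sqrt hb]
  exact div_le_of_le_mul₀ hb hb (by nlinarith [sq_abs s, abs_nonneg s])

lemma sqrt_mul_lt_abs_of_lt_sq_div {s b x : ℝ} (hb : 0 < b) (hx : 0 ≤ x) (h : x < (s / b) ^ 2) :
    √x * b < |s| := by
  have := sqrt_lt_sqrt hx h
  rwa [sqrt_sq_eq_abs, abs_div, abs_of_pos hb, lt_div_iff₀ hb] at this

/-- Tail bound for the truncated normalized sum: under Sakhanenko's condition, with
`Sₙ = Σ ξᵢ`, `Bₙ² = Σ E ξᵢ²`, `Sₙ* = Sₙ 1(|Sₙ| ≤ Bₙ²)`, one has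
`P((Sₙ*/Bₙ)² > x) ≤ 2 exp(-c₂ x)` for all `x ≥ 0`, where `c₂ = (1/2) min(λ/3, 1/2)`. -/
theorem stmt6 {Ω : Type*} [MeasurableSpace Ω] (μ : Measure Ω) [IsProbabilityMeasure μ]
    (n : ℕ) (ξ : Fin n → Ω → ℝ) (hmeas : ∀ i, Measurable (ξ i))
    (hindep : iIndepFun ξ μ)
    (l : ℝ) (hl : 0 < l)
    (hmean : ∀ i, ∫ ω, ξ i ω ∂μ = 0)
    (hvar_int : ∀ i, Integrable (fun ω => (ξ i ω) ^ 2) μ)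
    (hsak_int : ∀ i, Integrable (fun ω => |ξ i ω| ^ 3 * Real.exp (l * |ξ i ω|)) μ)
    (hsak : ∀ i, l * ∫ ω, |ξ i ω| ^ 3 * Real.exp (l * |ξ i ω|) ∂μ ≤ ∫ ω, (ξ i ω) ^ 2 ∂μ) :
    let S : Ω → ℝ := fun ω => ∑ i, ξ i ω
    let B2 : ℝ := ∑ i, ∫ ω, (ξ i ω) ^ 2 ∂μ
    let B : ℝ := Real.sqrt B2
    let Sstar : Ω → ℝ := fun ω => if |S ω| ≤ B2 then S ω else 0
    let c₂ : ℝ := (1 / 2) * min (l / 3) (1 / 2)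
    ∀ x : ℝ, 0 ≤ x →
      μ {ω | (Sstar ω / B) ^ 2 > x} ≤ ENNReal.ofReal (2 * Real.exp (-c₂ * x)) := by
  intro S B2 B Sstar c₂ x hx
  have hB2 : 0 ≤ B2 := Finset.sum_nonneg fun i _ => integral_nonneg fun ω => sq_nonneg _
  have hSstar : ∀ ω, |Sstar ω| ≤ |S ω| ∧ |Sstar ω| ≤ B2 := fun ω => by
    simp only [Sstar]
    split_ifs with h <;> simp [h, hB2]
  rcases le_or_gt B2 x with hxB | hxB
  · have hempty : {ω | (Sstar ω / B) ^ 2 > x} = ∅ := Set.eq_empty_of_forall_notMem fun ω hω =>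
      (sq_div_sqrt_le_of_abs_le (hSstar ω).2).not_gt (hxB.trans_lt hω)
    simp [hempty]
  have hc₂ : 0 ≤ c₂ := by positivity
  have hc₂_le : c₂ ≤ 1 / 4 := by simp only [c₂]; linarith [min_le_right (l / 3) (1 / 2)]
  have h2c₂ : 2 * c₂ ≤ l / 3 := by simp only [c₂]; linarith [min_le_left (l / 3) (1 / 2)]
  have hL2 : ∀ i, MemLp (ξ i) 2 μ := fun i =>
    (memLp_two_iff_integrable_sq (hmeas i).aestronglyMeasurable).2 (hvar_int i)
  calc μ {ω | (Sstar ω / B) ^ 2 > x} ≤ μ {ω | √x * √B2 ≤ |S ω|} := measure_mono fun ω hω =>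
        (sqrt_mul_lt_abs_of_lt_sq_div (sqrt_pos.2 (hx.trans_lt hxB)) hx hω).le.trans (hSstar ω).1
    _ = ENNReal.ofReal (μ.real {ω | √x * √B2 ≤ |S ω|}) := (ofReal_measureReal).symm
    _ ≤ ENNReal.ofReal (2 * exp (-c₂ * x)) := ENNReal.ofReal_le_ofReal <|
        measureReal_sqrt_mul_le_abs_le_of_mgf_le hc₂ hc₂_le hx hxB
          (fun u hu =>
            hindep.integrable_exp_mul_sum_of_sakhanenko hmeas hL2 hsak_int (hu.trans h2c₂))
          (fun u hu => hindep.mgf_sum_le_of_sakhanenko hL2 hmean hsak_int hsak (hu.trans h2c₂))
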